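/- arXiv:1110.0333 — 2 statements merged into one kernel-verified Lean document; each statement's English description precedes it below -/
import Mathlib

section
/- Suppose {a_n}_{n=0}^∞ is a Stieltjes moment sequence with representing measure μ, κ is an integer ≥ 2, and {a_n^{1/κ}}_{n=0}^∞ is a Stieltjes moment sequence with representing measure ν. Let θ1, θ2 be real numbers with 0 ≤ θ1 < θ2, and set α = (θ1/θ2)·θ2^{1/κ} and β = θ2^{1/κ}. Then the following are equivalent: (a) θ1 ∈ supp μ, θ2 = sup supp μ and μ((θ1,θ2)) = 0; (b) α ∈ supp ν, β = sup supp ν and ν((α,β)) = 0. -/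
open MeasureTheory

/-- The closed support of a Borel measure: the set of points all of whose open
neighbourhoods have positive measure. -/
def msupport {X : Type*} [TopologicalSpace X] [MeasurableSpace X] (μ : Measure X) : Set X :=
  {x | ∀ U : Set X, IsOpen U → x ∈ U → 0 < μ U}

/-- `μ` is a representing measure (on `[0,∞)`, modelled as a measure on `ℝ` vanishing on
`(-∞,0)`) of the Stieltjes moment sequence `a`. -/
def IsRepMeas (a : ℕ → ℝ) (μ : Measure ℝ) : Prop :=
  (∀ n, 0 ≤ a n) ∧ μ (Set.Iio 0) = 0 ∧
    ∀ n : ℕ, ∫⁻ x, ENNReal.ofReal (x ^ n) ∂μ = ENNReal.ofReal (a n)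

/-- `a` is a Stieltjes moment sequence. -/
def IsStieltjes (a : ℕ → ℝ) : Prop :=
  ∃ μ : Measure ℝ, IsRepMeas a μ

/-- A Stieltjes moment sequence is determinate if it has a unique representing measure. -/
def IsDeterminate (a : ℕ → ℝ) : Prop :=
  ∀ μ ν : Measure ℝ, IsRepMeas a μ → IsRepMeas a ν → μ = ν

/-!
Condition (a) says that `μ` is `c • δ θ2` (with `c > 0`) plus a measure on `[0, θ1]` whose
support contains `θ1`. On moments this reads: `a n - c * θ2 ^ n` is `O(θ1 ^ n)` and dominates a
multiple of `s ^ n` for every `s < θ1` (`HasExactGrowth`). Writing `a n = c * θ2 ^ n * (1 + e n)`,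
the relative error `e` has exact growth `θ1 / θ2`; as `(1 + e) ^ p - 1` is comparable to `e` for
bounded `e ≥ 0`, the sequence `a n ^ p` has the same shape with `c ^ p`, `θ2 ^ p` and growth
`θ1 / θ2 * θ2 ^ p`. Taking `p = 1 / κ` and `p = κ` gives both implications.
-/

open Set Filter Topology

lemma one_add_div_mul_le_rpow_one_add {p u : ℝ} (hp : 0 ≤ p) (hu : -1 < u) :
    1 + p / (1 + u) * u ≤ (1 + u) ^ p := by
  have hu1 : 0 < 1 + u := by linarith
  have hlog : u / (1 + u) ≤ Real.log (1 + u) := by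
    have := Real.one_sub_inv_le_log_of_pos hu1
    rwa [← one_div, one_sub_div hu1.ne', add_sub_cancel_left] at this
  rw [Real.rpow_def_of_pos hu1]
  calc 1 + p / (1 + u) * u = u / (1 + u) * p + 1 := by ring
    _ ≤ Real.log (1 + u) * p + 1 := by gcongr
    _ ≤ Real.exp (Real.log (1 + u) * p) := Real.add_one_le_exp _

lemma rpow_one_add_le_one_add_mul_rpow_mul {p u : ℝ} (hp : 0 ≤ p) (hu : -1 < u) :
    (1 + u) ^ p ≤ 1 + p * (1 + u) ^ p * u := by
  have hu1 : 0 < 1 + u := by linarith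
  have hlog : Real.log (1 + u) ≤ u := by linarith [Real.log_le_sub_one_of_pos hu1]
  set y := Real.log (1 + u) * p
  have key : Real.exp y ≤ 1 + y * Real.exp y := by
    have h := Real.add_one_le_exp (-y)
    have := mul_le_mul_of_nonneg_right h (Real.exp_pos y).le
    rw [← Real.exp_add, neg_add_cancel, Real.exp_zero] at this
    linarith
  rw [Real.rpow_def_of_pos hu1]
  calc Real.exp y ≤ 1 + y * Real.exp y := key
    _ ≤ 1 + u * p * Real.exp y := by gcongr; exact mul_le_mul_of_nonneg_right hlog hp
    _ = 1 + p * Real.exp y * u := by ring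

/-- Since `0 ^ 0 = 1`, for `r = 0` the second clause says exactly `0 < e 0`. -/
def HasExactGrowth (e : ℕ → ℝ) (r : ℝ) : Prop :=
  (∃ C, ∀ n, e n ≤ C * r ^ n) ∧ ∀ s < r, ∃ m > 0, ∀ n, m * max s 0 ^ n ≤ e n

namespace HasExactGrowth

variable {e : ℕ → ℝ} {r : ℝ}

lemma nonneg (h : HasExactGrowth e r) (n : ℕ) : 0 ≤ e n := by
  obtain ⟨m, hm, hmn⟩ := h.2 (r - 1) (by linarith)
  exact le_trans (by positivity) (hmn n)

lemma const_mul (h : HasExactGrowth e r) {c : ℝ} (hc : 0 < c) :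
    HasExactGrowth (fun n => c * e n) r := by
  obtain ⟨⟨C, hC⟩, hlow⟩ := h
  refine ⟨⟨c * C, fun n => ?_⟩, fun s hs => ?_⟩
  · rw [mul_assoc]; exact mul_le_mul_of_nonneg_left (hC n) hc.le
  · obtain ⟨m, hm, hmn⟩ := hlow s hs
    exact ⟨c * m, mul_pos hc hm, fun n => by
      rw [mul_assoc]; exact mul_le_mul_of_nonneg_left (hmn n) hc.le⟩

lemma mul_pow (h : HasExactGrowth e r) {θ : ℝ} (hθ : 0 < θ) :
    HasExactGrowth (fun n => e n * θ ^ n) (r * θ) := by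
  obtain ⟨⟨C, hC⟩, hlow⟩ := h
  refine ⟨⟨C, fun n => ?_⟩, fun s hs => ?_⟩
  · rw [_root_.mul_pow, ← mul_assoc]
    exact mul_le_mul_of_nonneg_right (hC n) (by positivity)
  · obtain ⟨m, hm, hmn⟩ := hlow (s / θ) ((div_lt_iff₀ hθ).2 hs)
    refine ⟨m, hm, fun n => ?_⟩
    have hs' : max s 0 = max (s / θ) 0 * θ := by
      rw [max_mul_of_nonneg _ _ hθ.le, div_mul_cancel₀ _ hθ.ne', zero_mul]
    rw [hs', _root_.mul_pow, ← mul_assoc]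
    exact mul_le_mul_of_nonneg_right (hmn n) (by positivity)

lemma one_add_rpow_sub_one (h : HasExactGrowth e r) (hr0 : 0 ≤ r) (hr1 : r ≤ 1) {p : ℝ}
    (hp : 0 < p) : HasExactGrowth (fun n => (1 + e n) ^ p - 1) r := by
  have he := h.nonneg
  obtain ⟨⟨C, hC⟩, hlow⟩ := h
  set U := max C 0
  have heU : ∀ n, e n ≤ U := fun n =>
    (hC n).trans <| (mul_le_mul_of_nonneg_right (le_max_left C 0) (by positivity)).trans <|
      mul_le_of_le_one_right (le_max_right C 0) (pow_le_one₀ hr0 hr1)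
  refine ⟨⟨p * (1 + U) ^ p * C, fun n => ?_⟩, fun s hs => ?_⟩
  · calc (1 + e n) ^ p - 1 ≤ p * (1 + e n) ^ p * e n := by
          linarith [rpow_one_add_le_one_add_mul_rpow_mul hp.le (by linarith [he n] : -1 < e n)]
      _ ≤ p * (1 + U) ^ p * e n := by gcongr <;> linarith [he n, heU n]
      _ ≤ p * (1 + U) ^ p * C * r ^ n := by rw [mul_assoc _ C]; gcongr; exact hC n
  · obtain ⟨m, hm, hmn⟩ := hlow s hs
    refine ⟨p / (1 + U) * m, by positivity, fun n => ?_⟩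
    calc p / (1 + U) * m * max s 0 ^ n ≤ p / (1 + U) * e n := by
          rw [mul_assoc]; gcongr; exact hmn n
      _ ≤ p / (1 + e n) * e n := by gcongr <;> linarith [he n, heU n]
      _ ≤ (1 + e n) ^ p - 1 := by
          linarith [one_add_div_mul_le_rpow_one_add hp.le (by linarith [he n] : -1 < e n)]

lemma rpow_sub {a : ℕ → ℝ} {c θ : ℝ}
    (h : HasExactGrowth (fun n => a n - c * θ ^ n) r) (ha : ∀ n, 0 ≤ a n) (hc : 0 < c)
    (hθ : 0 < θ) (hr0 : 0 ≤ r) (hrθ : r ≤ θ) {p : ℝ} (hp : 0 < p) :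
    HasExactGrowth (fun n => a n ^ p - c ^ p * (θ ^ p) ^ n) (r / θ * θ ^ p) := by
  -- normalise to the relative error `a n / (c * θ ^ n) - 1`, which has rate `r / θ`
  have hrel := (h.const_mul (inv_pos.2 hc)).mul_pow (inv_pos.2 hθ)
  have hf := ((hrel.one_add_rpow_sub_one (by positivity)
    (by rw [← div_eq_mul_inv]; exact div_le_one_of_le₀ hrθ hθ.le) hp).const_mul
      (Real.rpow_pos_of_pos hc p)).mul_pow (Real.rpow_pos_of_pos hθ p)
  rw [← div_eq_mul_inv] at hf
  convert hf using 2 with n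
  have hcθ : 0 < c * θ ^ n := by positivity
  have hone : 1 + c⁻¹ * (a n - c * θ ^ n) * θ⁻¹ ^ n = a n / (c * θ ^ n) := by
    rw [inv_pow]; field_simp; ring
  rw [hone, Real.div_rpow (ha n) hcθ.le, Real.mul_rpow hc.le (by positivity),
    Real.rpow_pow_comm hθ.le]
  field_simp

end HasExactGrowth

lemma msupport_eq_support {X : Type*} [TopologicalSpace X] [MeasurableSpace X]
    (μ : Measure X) : msupport μ = μ.support := by
  rw [Measure.support_eq_forall_isOpen]
  ext x
  exact ⟨fun h U hxU hU => h U hU hxU, fun h U hU hxU => h U hxU hU⟩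

lemma nonpos_of_forall_mul_pow_le {m C s t : ℝ} (hs : 0 ≤ s) (hst : s < t)
    (h : ∀ n : ℕ, m * t ^ n ≤ C * s ^ n) : m ≤ 0 := by
  have ht : 0 < t := hs.trans_lt hst
  have hlim : Tendsto (fun n : ℕ => C * (s / t) ^ n) atTop (𝓝 0) := by
    simpa using (tendsto_pow_atTop_nhds_zero_of_lt_one (div_nonneg hs ht.le)
      ((div_lt_one ht).2 hst)).const_mul C
  refine ge_of_tendsto' hlim fun n => ?_
  rw [div_pow, ← mul_div_assoc, le_div_iff₀ (pow_pos ht n)]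
  exact h n

namespace IsRepMeas

variable {a : ℕ → ℝ} {μ : Measure ℝ} {θ1 θ2 : ℝ}

lemma isFiniteMeasure (hμ : IsRepMeas a μ) : IsFiniteMeasure μ :=
  ⟨by simpa using (hμ.2.2 0).trans_lt ENNReal.ofReal_lt_top⟩

lemma ae_nonneg (hμ : IsRepMeas a μ) : ∀ᵐ x ∂μ, 0 ≤ x := by
  rw [ae_iff]
  simp only [not_le]
  exact hμ.2.1

lemma pow_nonneg_ae (hμ : IsRepMeas a μ) (n : ℕ) : 0 ≤ᵐ[μ] fun x => x ^ n :=
  hμ.ae_nonneg.mono fun _ hx => pow_nonneg hx n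

lemma integrable_pow (hμ : IsRepMeas a μ) (n : ℕ) : Integrable (fun x => x ^ n) μ := by
  refine ⟨(continuous_pow n).aestronglyMeasurable,
    (hasFiniteIntegral_iff_ofReal (hμ.pow_nonneg_ae n)).2 ?_⟩
  rw [hμ.2.2 n]
  exact ENNReal.ofReal_lt_top

lemma integral_pow (hμ : IsRepMeas a μ) (n : ℕ) : ∫ x, x ^ n ∂μ = a n := by
  rw [integral_eq_lintegral_of_nonneg_ae (hμ.pow_nonneg_ae n)
    (continuous_pow n).aestronglyMeasurable, hμ.2.2 n, ENNReal.toReal_ofReal (hμ.1 n)]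

lemma setIntegral_pow_le (hμ : IsRepMeas a μ) (S : Set ℝ) (n : ℕ) :
    ∫ x in S, x ^ n ∂μ ≤ a n :=
  hμ.integral_pow n ▸ setIntegral_le_integral (hμ.integrable_pow n) (hμ.pow_nonneg_ae n)

lemma mul_pow_le_setIntegral (hμ : IsRepMeas a μ) {S : Set ℝ} (hS : MeasurableSet S) {t : ℝ}
    (ht : 0 ≤ t) (hSt : S ⊆ Ici t) (n : ℕ) : μ.real S * t ^ n ≤ ∫ x in S, x ^ n ∂μ := by
  have := hμ.isFiniteMeasure
  rw [mul_comm]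
  exact setIntegral_ge_of_const_le_real hS (measure_ne_top μ S)
    (fun x hx => pow_le_pow_left₀ ht (hSt hx) n) (hμ.integrable_pow n).integrableOn

lemma measureReal_mul_pow_le (hμ : IsRepMeas a μ) {S : Set ℝ} (hS : MeasurableSet S) {t : ℝ}
    (ht : 0 ≤ t) (hSt : S ⊆ Ici t) (n : ℕ) : μ.real S * t ^ n ≤ a n :=
  (hμ.mul_pow_le_setIntegral hS ht hSt n).trans (hμ.setIntegral_pow_le S n)

lemma measureReal_singleton_mul_pow_add_le (hμ : IsRepMeas a μ) {θ t : ℝ} (hθ : 0 ≤ θ)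
    (ht : 0 ≤ t) {S : Set ℝ} (hS : MeasurableSet S) (hSt : S ⊆ Ici t) (hθS : θ ∉ S) (n : ℕ) :
    μ.real {θ} * θ ^ n + μ.real S * t ^ n ≤ a n := by
  have hint := (hμ.integrable_pow n).integrableOn (s := S)
  calc μ.real {θ} * θ ^ n + μ.real S * t ^ n
      ≤ ∫ x in {θ}, x ^ n ∂μ + ∫ x in S, x ^ n ∂μ := by
        gcongr
        · exact hμ.mul_pow_le_setIntegral (measurableSet_singleton θ) hθ (by simp) n
        · exact hμ.mul_pow_le_setIntegral hS ht hSt n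
    _ = ∫ x in {θ} ∪ S, x ^ n ∂μ :=
        (setIntegral_union (by simpa using hθS) hS (hμ.integrable_pow n).integrableOn hint).symm
    _ ≤ a n := hμ.setIntegral_pow_le _ n

lemma le_measureReal_singleton_mul_pow_add (hμ : IsRepMeas a μ) {θ s : ℝ} (hsθ : s < θ)
    (hgap : μ (Ioo s θ) = 0) (htop : μ (Ioi θ) = 0) (n : ℕ) :
    a n ≤ μ.real {θ} * θ ^ n + μ.real (Iic s) * max s 0 ^ n := by
  have := hμ.isFiniteMeasure
  have hnull : ∀ᵐ x ∂μ, x ∉ Iic s ∪ {θ} → x ^ n = 0 := by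
    refine measure_mono_null (fun x hx => ?_) (measure_union_null hgap htop)
    contrapose! hx
    simp only [mem_union, mem_Ioo, mem_Ioi, mem_Iic, mem_singleton_iff] at hx ⊢
    grind
  have hbound : ∀ᵐ x ∂μ.restrict (Iic s), x ^ n ≤ max s 0 ^ n := by
    rw [ae_restrict_iff' measurableSet_Iic]
    filter_upwards [hμ.ae_nonneg] with x hx hxs
    exact pow_le_pow_left₀ hx (le_max_of_le_left hxs) n
  rw [← hμ.integral_pow n, ← setIntegral_eq_integral_of_ae_compl_eq_zero hnull,
    setIntegral_union (by simpa using hsθ.not_ge) (measurableSet_singleton θ)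
      (hμ.integrable_pow n).integrableOn (hμ.integrable_pow n).integrableOn,
    integral_singleton, smul_eq_mul, add_comm]
  gcongr
  calc ∫ x in Iic s, x ^ n ∂μ ≤ ∫ _ in Iic s, max s 0 ^ n ∂μ :=
        setIntegral_mono_ae_restrict (hμ.integrable_pow n).integrableOn
          (integrableOn_const (measure_ne_top μ _)) hbound
    _ = μ.real (Iic s) * max s 0 ^ n := by rw [setIntegral_const, smul_eq_mul]

lemma measure_Ioi_eq_zero_of_le (hμ : IsRepMeas a μ) {C θ : ℝ} (hθ : 0 ≤ θ)
    (h : ∀ n, a n ≤ C * θ ^ n) : μ (Ioi θ) = 0 := by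
  have := hμ.isFiniteMeasure
  refine measure_null_of_locally_null _ fun x hx => ?_
  obtain ⟨s, hθs, hsx⟩ := exists_between (show θ < x from hx)
  refine ⟨Ioi s, mem_nhdsWithin_of_mem_nhds (Ioi_mem_nhds hsx), ?_⟩
  have hs : μ.real (Ioi s) ≤ 0 := nonpos_of_forall_mul_pow_le hθ hθs fun n =>
    (hμ.measureReal_mul_pow_le measurableSet_Ioi (hθ.trans hθs.le) Ioi_subset_Ici_self n).trans
      (h n)
  exact (measureReal_eq_zero_iff (measure_ne_top μ _)).1 (hs.antisymm measureReal_nonneg)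

lemma measure_Ioo_eq_zero_of_le (hμ : IsRepMeas a μ) {c C : ℝ} (h0 : 0 ≤ θ1)
    (hlo : ∀ n, c * θ2 ^ n ≤ a n) (hup : ∀ n, a n ≤ c * θ2 ^ n + C * θ1 ^ n)
    (htop : μ (Ioi θ2) = 0) : μ (Ioo θ1 θ2) = 0 := by
  have := hμ.isFiniteMeasure
  -- `∫ x ^ n (θ2 - x) dμ` ignores the atom at `θ2`, and is `O(θ1 ^ n)`
  have hint : ∀ n, Integrable (fun x => θ2 * x ^ n - x ^ (n + 1)) μ := fun n =>
    ((hμ.integrable_pow n).const_mul θ2).sub (hμ.integrable_pow (n + 1))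
  have hmom : ∀ n, ∫ x, θ2 * x ^ n - x ^ (n + 1) ∂μ = θ2 * a n - a (n + 1) := fun n => by
    rw [integral_sub ((hμ.integrable_pow n).const_mul θ2) (hμ.integrable_pow (n + 1)),
      integral_const_mul, hμ.integral_pow, hμ.integral_pow]
  have hle : ∀ᵐ x ∂μ, x ≤ θ2 := by
    rw [ae_iff]
    simp only [not_le]
    exact htop
  have hnn : ∀ n, 0 ≤ᵐ[μ] fun x => θ2 * x ^ n - x ^ (n + 1) := fun n => by
    filter_upwards [hμ.ae_nonneg, hle] with x hx0 hx2
    rw [Pi.zero_apply, pow_succ]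
    nlinarith [pow_nonneg hx0 n]
  refine measure_null_of_locally_null _ fun x hx => ?_
  obtain ⟨γ, h1γ, hγx⟩ := exists_between hx.1
  obtain ⟨δ, hxδ, hδ2⟩ := exists_between hx.2
  refine ⟨Ioo γ δ, mem_nhdsWithin_of_mem_nhds (Ioo_mem_nhds hγx hxδ), ?_⟩
  have hγ : 0 ≤ γ := h0.trans h1γ.le
  have hθ2 : 0 ≤ θ2 := by linarith [hx.1, hx.2]
  have key : ∀ n, μ.real (Ioo γ δ) * (θ2 - δ) * γ ^ n ≤ C * θ2 * θ1 ^ n := fun n =>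
    calc μ.real (Ioo γ δ) * (θ2 - δ) * γ ^ n = γ ^ n * (θ2 - δ) * μ.real (Ioo γ δ) := by ring
      _ ≤ ∫ x in Ioo γ δ, θ2 * x ^ n - x ^ (n + 1) ∂μ := by
          refine setIntegral_ge_of_const_le_real measurableSet_Ioo (measure_ne_top _ _)
            (fun y hy => ?_) (hint n).integrableOn
          have hyn : γ ^ n ≤ y ^ n := pow_le_pow_left₀ hγ hy.1.le n
          rw [pow_succ]
          nlinarith [hy.2, pow_nonneg hγ n]
      _ ≤ ∫ x, θ2 * x ^ n - x ^ (n + 1) ∂μ := setIntegral_le_integral (hint n) (hnn n)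
      _ = θ2 * a n - a (n + 1) := hmom n
      _ ≤ C * θ2 * θ1 ^ n := by
          linear_combination mul_le_mul_of_nonneg_left (hup n) hθ2 + hlo (n + 1)
  have hγδ : μ.real (Ioo γ δ) * (θ2 - δ) ≤ 0 := nonpos_of_forall_mul_pow_le h0 h1γ key
  have : μ.real (Ioo γ δ) ≤ 0 := by nlinarith [measureReal_nonneg (μ := μ) (s := Ioo γ δ)]
  exact (measureReal_eq_zero_iff (measure_ne_top μ _)).1 (this.antisymm measureReal_nonneg)

lemma exists_hasExactGrowth (hμ : IsRepMeas a μ) (h0 : 0 ≤ θ1) (h12 : θ1 < θ2)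
    (h1 : θ1 ∈ μ.support) (h2 : IsLUB μ.support θ2) (hgap : μ (Ioo θ1 θ2) = 0) :
    ∃ c > 0, HasExactGrowth (fun n => a n - c * θ2 ^ n) θ1 := by
  have := hμ.isFiniteMeasure
  have hθ2 : 0 ≤ θ2 := h0.trans h12.le
  have htop : μ (Ioi θ2) = 0 :=
    measure_mono_null (fun x hx hxs => (h2.1 hxs).not_gt hx) Measure.measure_compl_support
  have hatom : 0 < μ.real {θ2} := by
    have h2mem : θ2 ∈ μ.support := h2.mem_of_isClosed ⟨θ1, h1⟩ Measure.isClosed_support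
    refine ENNReal.toReal_pos (fun hz => ?_) (measure_ne_top _ _)
    have hIoi : μ (Ioi θ1) = 0 := by
      refine measure_mono_null (fun x hx => ?_)
        (measure_union_null (measure_union_null hgap hz) htop)
      rcases lt_trichotomy x θ2 with h | h | h
      exacts [Or.inl (Or.inl ⟨hx, h⟩), Or.inl (Or.inr h), Or.inr h]
    exact ((Measure.mem_support_iff_forall θ2).1 h2mem _ (Ioi_mem_nhds h12)).ne' hIoi
  refine ⟨μ.real {θ2}, hatom, ⟨μ.real (Iic θ1), fun n => ?_⟩, fun t ht => ?_⟩
  · have := hμ.le_measureReal_singleton_mul_pow_add h12 hgap htop n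
    rw [max_eq_left h0] at this
    linarith
  · set S := Ico (max t 0) θ2
    have hS : 0 < μ.real S := by
      refine ENNReal.toReal_pos (fun hz => ?_) (measure_ne_top _ _)
      have hIoo : μ (Ioo t θ2) = 0 := by
        refine measure_mono_null (fun x hx => ?_) (measure_union_null hμ.2.1 hz)
        rcases lt_or_ge x 0 with h | h
        exacts [Or.inl h, Or.inr ⟨max_le hx.1.le h, hx.2⟩]
      exact ((Measure.mem_support_iff_forall θ1).1 h1 _ (Ioo_mem_nhds ht h12)).ne' hIoo
    refine ⟨μ.real S, hS, fun n => ?_⟩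
    have := hμ.measureReal_singleton_mul_pow_add_le hθ2 (le_max_right t 0) measurableSet_Ico
      (fun x hx => hx.1) (fun hx => hx.2.false) n
    linarith

lemma mem_support_of_hasExactGrowth (hμ : IsRepMeas a μ) (h12 : θ1 < θ2)
    (h : HasExactGrowth (fun n => a n - μ.real {θ2} * θ2 ^ n) θ1)
    (hgap : μ (Ioo θ1 θ2) = 0) (htop : μ (Ioi θ2) = 0) : θ1 ∈ μ.support := by
  have := hμ.isFiniteMeasure
  by_contra hθ1
  obtain ⟨U, hU, hUz⟩ := Measure.notMem_support_iff_exists.1 hθ1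
  obtain ⟨l, u, ⟨hl, hu⟩, hlu⟩ := mem_nhds_iff_exists_Ioo_subset.1 hU
  have hgap' : μ (Ioo l θ2) = 0 := by
    refine measure_mono_null (fun x hx => ?_) (measure_union_null hUz hgap)
    rcases lt_or_ge x u with h | h
    exacts [Or.inl (hlu ⟨hx.1, h⟩), Or.inr ⟨hu.trans_le h, hx.2⟩]
  obtain ⟨m, hm, hmn⟩ := h.2 ((l + θ1) / 2) (by linarith)
  have key : ∀ n, m * max ((l + θ1) / 2) 0 ^ n ≤ μ.real (Iic l) * max l 0 ^ n := fun n => by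
    linarith [hmn n, hμ.le_measureReal_singleton_mul_pow_add (hl.trans h12) hgap' htop n]
  rcases le_or_gt ((l + θ1) / 2) 0 with ht | ht
  · -- then `l < 0`, so `Iic l` is null and `n = 0` already gives `m ≤ 0`
    have hIic : μ.real (Iic l) = 0 := measureReal_mono_null (Iic_subset_Iio.2 (by linarith))
      ((measureReal_eq_zero_iff (measure_ne_top μ _)).2 hμ.2.1)
    linarith [key 0, hIic]
  · have hlt : max l 0 < (l + θ1) / 2 := max_lt (by linarith) ht
    rw [max_eq_left ht.le] at key
    linarith [nonpos_of_forall_mul_pow_le (le_max_right l 0) hlt key]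

lemma support_gap_of_hasExactGrowth (hμ : IsRepMeas a μ) (h0 : 0 ≤ θ1) (h12 : θ1 < θ2)
    {c : ℝ} (hc : 0 < c) (h : HasExactGrowth (fun n => a n - c * θ2 ^ n) θ1) :
    θ1 ∈ μ.support ∧ IsLUB μ.support θ2 ∧ μ (Ioo θ1 θ2) = 0 := by
  have := hμ.isFiniteMeasure
  have hθ2 : 0 ≤ θ2 := h0.trans h12.le
  obtain ⟨C, hC⟩ := h.1
  have hlo : ∀ n, c * θ2 ^ n ≤ a n := fun n => by linarith [h.nonneg n]
  have hup : ∀ n, a n ≤ c * θ2 ^ n + C * θ1 ^ n := fun n => by linarith [hC n]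
  have hC0 : 0 ≤ C := by simpa using (h.nonneg 0).trans (hC 0)
  have htop : μ (Ioi θ2) = 0 := hμ.measure_Ioi_eq_zero_of_le (C := c + C) hθ2 fun n => by
    linear_combination hup n + C * pow_le_pow_left₀ h0 h12.le n
  have hgap := hμ.measure_Ioo_eq_zero_of_le h0 hlo hup htop
  have hatom : μ.real {θ2} = c := by
    refine le_antisymm ?_ ?_ <;> rw [← sub_nonpos]
    · refine nonpos_of_forall_mul_pow_le (C := C) h0 h12 fun n => ?_
      linear_combination hup n +
        hμ.measureReal_mul_pow_le (measurableSet_singleton θ2) hθ2 (by simp) n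
    · refine nonpos_of_forall_mul_pow_le (C := μ.real (Iic θ1)) h0 h12 fun n => ?_
      have := hμ.le_measureReal_singleton_mul_pow_add h12 hgap htop n
      rw [max_eq_left h0] at this
      linear_combination hlo n + this
  have hpos : 0 < μ {θ2} := (ENNReal.toReal_pos_iff.1 (hatom.symm ▸ hc : 0 < μ.real {θ2})).1
  have h2mem : θ2 ∈ μ.support := (Measure.mem_support_iff_forall θ2).2 fun U hU =>
    hpos.trans_le (measure_mono (singleton_subset_iff.2 (mem_of_mem_nhds hU)))
  refine ⟨hμ.mem_support_of_hasExactGrowth h12 (hatom ▸ h) hgap htop,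
    ⟨fun x hx => ?_, fun b hb => hb h2mem⟩, hgap⟩
  by_contra! hx2
  exact ((Measure.mem_support_iff_forall x).1 hx _ (Ioi_mem_nhds hx2)).ne' htop

lemma msupport_gap_iff (hμ : IsRepMeas a μ) (h0 : 0 ≤ θ1) (h12 : θ1 < θ2) :
    (θ1 ∈ msupport μ ∧ IsLUB (msupport μ) θ2 ∧ μ (Ioo θ1 θ2) = 0) ↔
      ∃ c > 0, HasExactGrowth (fun n => a n - c * θ2 ^ n) θ1 := by
  rw [msupport_eq_support]
  exact ⟨fun ⟨h1, h2, hgap⟩ => hμ.exists_hasExactGrowth h0 h12 h1 h2 hgap,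
    fun ⟨_, hc, h⟩ => hμ.support_gap_of_hasExactGrowth h0 h12 hc h⟩

end IsRepMeas

theorem stmt11 (a : ℕ → ℝ) (μ ν : Measure ℝ) (κ : ℕ) (hκ : 2 ≤ κ)
    (hμ : IsRepMeas a μ)
    (hν : IsRepMeas (fun n => a n ^ (1 / (κ : ℝ))) ν)
    (θ1 θ2 : ℝ) (h0 : 0 ≤ θ1) (h12 : θ1 < θ2)
    (α β : ℝ)
    (hα : α = θ1 / θ2 * θ2 ^ (1 / (κ : ℝ)))
    (hβ : β = θ2 ^ (1 / (κ : ℝ))) :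
    (θ1 ∈ msupport μ ∧ IsLUB (msupport μ) θ2 ∧ μ (Set.Ioo θ1 θ2) = 0) ↔
      (α ∈ msupport ν ∧ IsLUB (msupport ν) β ∧ ν (Set.Ioo α β) = 0) := by
  have hθ2 : 0 < θ2 := h0.trans_lt h12
  have hκ0 : 0 < (κ : ℝ) := Nat.cast_pos.2 (by omega)
  have hβ0 : 0 < β := hβ ▸ Real.rpow_pos_of_pos hθ2 _
  have hα0 : 0 ≤ α := hα ▸ by positivity
  have hαβ : α < β := hα ▸ hβ ▸ mul_lt_of_lt_one_left (hβ ▸ hβ0) ((div_lt_one hθ2).2 h12)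
  have hβκ : β ^ (κ : ℝ) = θ2 := by
    rw [hβ, ← Real.rpow_mul hθ2.le, one_div_mul_cancel hκ0.ne', Real.rpow_one]
  have hαβθ : α / β * θ2 = θ1 := by
    rw [hα, ← hβ]
    field_simp
  have haκ : ∀ n, (a n ^ (1 / (κ : ℝ))) ^ (κ : ℝ) = a n := fun n => by
    rw [← Real.rpow_mul (hμ.1 n), one_div_mul_cancel hκ0.ne', Real.rpow_one]
  rw [hμ.msupport_gap_iff h0 h12, hν.msupport_gap_iff hα0 hαβ]
  constructor
  · rintro ⟨c, hc, h⟩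
    refine ⟨c ^ (1 / (κ : ℝ)), Real.rpow_pos_of_pos hc _, ?_⟩
    simpa only [hα, hβ] using h.rpow_sub hμ.1 hc hθ2 h0 h12.le (by positivity)
  · rintro ⟨c, hc, h⟩
    refine ⟨c ^ (κ : ℝ), Real.rpow_pos_of_pos hc _, ?_⟩
    simpa only [haκ, hβκ, hαβθ] using h.rpow_sub hν.1 hc hβ0 hα0 hαβ.le hκ0
end

section
/- Suppose {a_n}_{n=0}^∞ is a Stieltjes moment sequence with representing measure μ, κ is an integer ≥ 2, {a_n^{1/κ}}_{n=0}^∞ is a Stieltjes moment sequence with representing measure ν, and {a_n}_{n=0}^∞ is determinate. Then: (i) if ν([0,β)) = 0 for some real β > 0, then μ([0,β^κ)) = 0; (ii) if μ([0,θ)) = 0 for some real θ > 0, then ν([0,θ^{1/κ})) = 0; (iii) if μ([0,θ)) = 0 for some real θ > 0 with θ ∈ supp μ, then ν([0,θ^{1/κ})) = 0 and θ^{1/κ} ∈ supp ν. -/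
open MeasureTheory

/-!
By determinacy, `μ` is the `κ`-fold multiplicative convolution power `ν^{*κ}` of `ν`: the latter
has moments `(a_n^{1/κ})^κ = a_n`. A product of `κ` factors that are `≥ β` is `≥ β^κ`, which gives
(i); the bound `ν([0,c))^κ ≤ ν^{*κ}([0,c)^κ) ≤ μ([0,c^κ))` gives (ii); and for (iii), a `ν`-null
neighbourhood of `θ^{1/κ}` would, by the argument of (i), produce a `μ`-null neighbourhood of `θ`.
-/

open MeasureTheory Measure Set
open scoped Pointwise

namespace MeasureTheory.Measure

variable {M : Type*} [Monoid M] [MeasurableSpace M]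

noncomputable def mconvPow (ν : Measure M) : ℕ → Measure M
  | 0 => dirac 1
  | k + 1 => ν ∗ₘ ν.mconvPow k

variable [MeasurableMul₂ M]

instance sfinite_mconvPow (ν : Measure M) [SFinite ν] : ∀ k, SFinite (ν.mconvPow k)
  | 0 => inferInstanceAs (SFinite (dirac 1))
  | k + 1 => have := sfinite_mconvPow ν k; inferInstanceAs (SFinite (ν ∗ₘ ν.mconvPow k))

theorem measure_mul_le_mconv_apply_mul (ν ρ : Measure M) [SFinite ρ] (s t : Set M) :
    ν s * ρ t ≤ (ν ∗ₘ ρ) (s * t) :=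
  calc ν s * ρ t = ν.prod ρ (s ×ˢ t) := (prod_prod s t).symm
    _ ≤ ν.prod ρ ((fun p : M × M ↦ p.1 * p.2) ⁻¹' (s * t)) :=
      measure_mono fun _ hp ↦ mul_mem_mul hp.1 hp.2
    _ ≤ (ν ∗ₘ ρ) (s * t) := le_map_apply (by fun_prop) _

theorem measure_pow_le_mconvPow_apply_pow (ν : Measure M) [SFinite ν] (s : Set M) :
    ∀ k, ν s ^ k ≤ ν.mconvPow k (s ^ k)
  | 0 => by simp [mconvPow]
  | k + 1 =>
    calc ν s ^ (k + 1) = ν s * ν s ^ k := pow_succ' _ _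
      _ ≤ ν s * ν.mconvPow k (s ^ k) := by gcongr; exact measure_pow_le_mconvPow_apply_pow ν s k
      _ ≤ ν.mconvPow (k + 1) (s ^ (k + 1)) := by
        rw [pow_succ']; exact measure_mul_le_mconv_apply_mul _ _ _ _

end MeasureTheory.Measure

section Real

variable {ν ρ : Measure ℝ}

theorem measure_Iio_eq_zero_iff_ae_le {β : ℝ} : ν (Iio β) = 0 ↔ ∀ᵐ x ∂ν, β ≤ x := by
  simp only [ae_iff, not_le]; rfl

theorem ae_mul_le_mconv [SFinite ν] [SFinite ρ] {β γ : ℝ} (hβ : 0 ≤ β) (hγ : 0 ≤ γ)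
    (hν : ∀ᵐ x ∂ν, β ≤ x) (hρ : ∀ᵐ y ∂ρ, γ ≤ y) : ∀ᵐ z ∂(ν ∗ₘ ρ), β * γ ≤ z := by
  rw [mconv, ae_map_iff (by fun_prop) measurableSet_Ici,
    ae_prod_iff_ae_ae (measurableSet_le measurable_const (by fun_prop))]
  filter_upwards [hν] with x hx
  filter_upwards [hρ] with y hy
  exact mul_le_mul hx hy hγ (hβ.trans hx)

theorem ae_pow_le_mconvPow [SFinite ν] {β : ℝ} (hβ : 0 ≤ β) (hν : ∀ᵐ x ∂ν, β ≤ x) :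
    ∀ k, ∀ᵐ z ∂ν.mconvPow k, β ^ k ≤ z
  | 0 => by simp [mconvPow, ae_dirac_eq]
  | k + 1 => by
    rw [pow_succ']
    exact ae_mul_le_mconv hβ (pow_nonneg hβ k) hν (ae_pow_le_mconvPow hβ hν k)

theorem ae_nonneg_mconvPow [SFinite ν] (hν : ∀ᵐ x ∂ν, 0 ≤ x) (k : ℕ) :
    ∀ᵐ z ∂ν.mconvPow k, 0 ≤ z :=
  (ae_pow_le_mconvPow le_rfl hν k).mono fun _ hz ↦ (pow_nonneg le_rfl k).trans hz

theorem lintegral_ofReal_pow_mconv [SFinite ρ] (hν : ∀ᵐ x ∂ν, 0 ≤ x) (n : ℕ) :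
    ∫⁻ z, ENNReal.ofReal (z ^ n) ∂(ν ∗ₘ ρ)
      = (∫⁻ x, ENNReal.ofReal (x ^ n) ∂ν) * ∫⁻ y, ENNReal.ofReal (y ^ n) ∂ρ := by
  rw [lintegral_mconv (by fun_prop), ← lintegral_mul_const _ (by fun_prop)]
  refine lintegral_congr_ae (hν.mono fun x hx ↦ ?_)
  simp only [← lintegral_const_mul _ (by fun_prop : Measurable fun y : ℝ ↦ ENNReal.ofReal (y ^ n)),
    mul_pow, ENNReal.ofReal_mul (pow_nonneg hx n)]

theorem lintegral_ofReal_pow_mconvPow [SFinite ν] (hν : ∀ᵐ x ∂ν, 0 ≤ x) (n : ℕ) :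
    ∀ k, ∫⁻ z, ENNReal.ofReal (z ^ n) ∂ν.mconvPow k = (∫⁻ x, ENNReal.ofReal (x ^ n) ∂ν) ^ k
  | 0 => by simp [mconvPow]
  | k + 1 => by
    rw [mconvPow, lintegral_ofReal_pow_mconv hν, lintegral_ofReal_pow_mconvPow hν n k, pow_succ']

theorem Ico_zero_pow_subset (c : ℝ) {k : ℕ} (hk : k ≠ 0) : Ico 0 c ^ k ⊆ Ico 0 (c ^ k) := by
  induction k with
  | zero => exact absurd rfl hk
  | succ k ih =>
    rcases eq_or_ne k 0 with rfl | hk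
    · simp
    rw [pow_succ', pow_succ']
    refine (mul_subset_mul_left (ih hk)).trans (mul_subset_iff.2 ?_)
    rintro x ⟨hx0, hxc⟩ y ⟨hy0, hyc⟩
    exact ⟨mul_nonneg hx0 hy0, mul_lt_mul'' hxc hyc hx0 hy0⟩

theorem measure_Iio_pow_mconvPow_eq_zero [SFinite ν] {β : ℝ} (hβ : 0 ≤ β)
    (hν : ν (Iio β) = 0) (k : ℕ) : ν.mconvPow k (Iio (β ^ k)) = 0 :=
  measure_Iio_eq_zero_iff_ae_le.2 (ae_pow_le_mconvPow hβ (measure_Iio_eq_zero_iff_ae_le.1 hν) k)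

theorem mem_msupport_of_pow_mem_msupport_mconvPow [SFinite ν] {c : ℝ}
    (hc : 0 ≤ c) (hνc : ν (Iio c) = 0) {k : ℕ} (hk : k ≠ 0)
    (h : c ^ k ∈ msupport (ν.mconvPow k)) : c ∈ msupport ν := by
  intro U hU hcU
  obtain ⟨ε, hε, hball⟩ := Metric.isOpen_iff.1 hU c hcU
  refine pos_iff_ne_zero.2 fun hνU ↦ ?_
  have hνcε : ν (Iio (c + ε)) = 0 := by
    refine measure_mono_null (fun x (hx : x < c + ε) ↦ ?_) (measure_union_null hνc hνU)
    rcases lt_or_ge x c with hxc | hxc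
    · exact Or.inl hxc
    · exact Or.inr (hball (by rw [Real.ball_eq_Ioo]; constructor <;> linarith))
  refine (h _ isOpen_Iio (pow_lt_pow_left₀ (lt_add_of_pos_right c hε) hc hk)).ne' ?_
  exact measure_Iio_pow_mconvPow_eq_zero (by linarith) hνcε k

end Real

namespace IsRepMeas

variable {b : ℕ → ℝ} {ν : Measure ℝ}

theorem isFiniteMeasure_s12 (h : IsRepMeas b ν) : IsFiniteMeasure ν := by
  have hmass := h.2.2 0
  simp only [pow_zero, ENNReal.ofReal_one, lintegral_one] at hmass
  exact ⟨hmass ▸ ENNReal.ofReal_lt_top⟩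

theorem ae_nonneg_s12 (h : IsRepMeas b ν) : ∀ᵐ x ∂ν, 0 ≤ x :=
  measure_Iio_eq_zero_iff_ae_le.1 h.2.1

theorem measure_Iio_eq_zero_iff (h : IsRepMeas b ν) {β : ℝ} (hβ : 0 ≤ β) :
    ν (Iio β) = 0 ↔ ν (Ico 0 β) = 0 :=
  ⟨measure_mono_null Ico_subset_Iio_self, fun hν ↦ by
    rw [← Iio_union_Ico_eq_Iio hβ]; exact measure_union_null h.2.1 hν⟩

theorem mconvPow (h : IsRepMeas b ν) (k : ℕ) :
    IsRepMeas (fun n ↦ b n ^ k) (ν.mconvPow k) := by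
  have := h.isFiniteMeasure_s12
  refine ⟨fun n ↦ pow_nonneg (h.1 n) k,
    measure_Iio_eq_zero_iff_ae_le.2 (ae_nonneg_mconvPow h.ae_nonneg_s12 k), fun n ↦ ?_⟩
  rw [lintegral_ofReal_pow_mconvPow h.ae_nonneg_s12, h.2.2 n, ENNReal.ofReal_pow (h.1 n)]

end IsRepMeas

theorem stmt12 (a : ℕ → ℝ) (μ ν : Measure ℝ) (κ : ℕ) (hκ : 2 ≤ κ)
    (hμ : IsRepMeas a μ)
    (hν : IsRepMeas (fun n => a n ^ (1 / (κ : ℝ))) ν)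
    (hdet : IsDeterminate a) :
    (∀ β : ℝ, 0 < β → ν (Set.Ico 0 β) = 0 → μ (Set.Ico 0 (β ^ κ)) = 0) ∧
    (∀ θ : ℝ, 0 < θ → μ (Set.Ico 0 θ) = 0 → ν (Set.Ico 0 (θ ^ (1 / (κ : ℝ)))) = 0) ∧
    (∀ θ : ℝ, 0 < θ → θ ∈ msupport μ → μ (Set.Ico 0 θ) = 0 →
      ν (Set.Ico 0 (θ ^ (1 / (κ : ℝ)))) = 0 ∧ θ ^ (1 / (κ : ℝ)) ∈ msupport ν) := by
  have hκ0 : κ ≠ 0 := by omega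
  have := hν.isFiniteMeasure_s12
  have hroot (x : ℝ) (hx : 0 ≤ x) : (x ^ (1 / (κ : ℝ))) ^ κ = x := by
    rw [one_div, Real.rpow_inv_natCast_pow hx hκ0]
  obtain rfl : μ = ν.mconvPow κ :=
    hdet μ _ hμ (by simpa only [hroot _ (hμ.1 _)] using hν.mconvPow κ)
  have part1 (β : ℝ) (hβ : 0 < β) (hνβ : ν (Ico 0 β) = 0) : ν.mconvPow κ (Ico 0 (β ^ κ)) = 0 :=
    (hμ.measure_Iio_eq_zero_iff (by positivity)).1 <|
      measure_Iio_pow_mconvPow_eq_zero hβ.le ((hν.measure_Iio_eq_zero_iff hβ.le).2 hνβ) κ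
  have part2 (θ : ℝ) (hθ : 0 < θ) (hμθ : ν.mconvPow κ (Ico 0 θ) = 0) :
      ν (Ico 0 (θ ^ (1 / (κ : ℝ)))) = 0 := by
    set c := θ ^ (1 / (κ : ℝ))
    refine (pow_eq_zero_iff hκ0).1 (le_antisymm ?_ zero_le)
    calc ν (Ico 0 c) ^ κ ≤ ν.mconvPow κ (Ico 0 c ^ κ) := measure_pow_le_mconvPow_apply_pow _ _ _
      _ ≤ ν.mconvPow κ (Ico 0 θ) := by
        rw [← hroot θ hθ.le]; exact measure_mono (Ico_zero_pow_subset c hκ0)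
      _ = 0 := hμθ
  refine ⟨part1, part2, fun θ hθ hsupp hμθ ↦ ⟨part2 θ hθ hμθ, ?_⟩⟩
  refine mem_msupport_of_pow_mem_msupport_mconvPow (by positivity) ?_ hκ0 (by rwa [hroot θ hθ.le])
  exact (hν.measure_Iio_eq_zero_iff (by positivity)).2 (part2 θ hθ hμθ)
end
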